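/- arXiv:1409.2289 — 3 statements merged into one kernel-verified Lean document; each statement's English description precedes it below -/
import Mathlib

section
/- Let d ≥ 1 and k ≥ 0 be integers, and let f : ℝ^d → ℝ be measurable with ∫ |x^α f(x)| dx < ∞ for a multi-index α ∈ ℕ^d with |α| = k+1. Define F_α(x) := (−1)^{|α|} ∫₀¹ (k+1) (1−t)^k t^{−d−|α|} (x^α / α!) f(x/t) dt. Then F_α is integrable on ℝ^d and ‖F_α‖_{L¹} ≤ ‖x^α f(x)‖_{L¹} / α!. -/
open MeasureTheory Real Filter

noncomputable section

/-- Partial derivative in the `i`-th coordinate direction on `ℝ^d`. -/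
def pd (d : ℕ) (i : Fin d) (f : EuclideanSpace ℝ (Fin d) → ℝ) :
    EuclideanSpace ℝ (Fin d) → ℝ :=
  fun x => fderiv ℝ f x (EuclideanSpace.single i 1)

/-- Mixed partial derivative `D^α = ∂₁^{α₁} ⋯ ∂_d^{α_d}`. -/
def Dmul (d : ℕ) (α : Fin d → ℕ) (f : EuclideanSpace ℝ (Fin d) → ℝ) :
    EuclideanSpace ℝ (Fin d) → ℝ :=
  ((List.finRange d).map (fun i => (pd d i)^[α i])).foldr (· ∘ ·) id f

/-- Heat kernel `G(x,t) = (4πt)^{-d/2} exp(-|x|²/(4t))` on `ℝ^d`. -/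
def heatKernel (d : ℕ) (x : EuclideanSpace ℝ (Fin d)) (t : ℝ) : ℝ :=
  (4 * π * t) ^ (-(d : ℝ) / 2) * Real.exp (-‖x‖ ^ 2 / (4 * t))

/-- The heat-kernel derivative approximation of order `k` built from `u₀`. -/
def heatApprox (d k : ℕ) (u₀ : EuclideanSpace ℝ (Fin d) → ℝ)
    (x : EuclideanSpace ℝ (Fin d)) (t : ℝ) : ℝ :=
  ∑ j ∈ Finset.range (k + 1), ∑ α ∈ Finset.Nat.antidiagonalTuple d j,
    ((-1 : ℝ) ^ (∑ i, α i) / ∏ i, ((α i).factorial : ℝ)) *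
      (∫ y, (∏ i, y i ^ α i) * u₀ y) * Dmul d α (fun z => heatKernel d z t) x

/-- The remainder function `F_α`. Here `k` should satisfy `|α| = k+1`. -/
def Falpha (d k : ℕ) (α : Fin d → ℕ) (f : EuclideanSpace ℝ (Fin d) → ℝ)
    (x : EuclideanSpace ℝ (Fin d)) : ℝ :=
  (-1 : ℝ) ^ (∑ i, α i) * ∫ t in (0:ℝ)..1,
    ((k : ℝ) + 1) * (1 - t) ^ k / t ^ (d + ∑ i, α i) *
      ((∏ i, x i ^ α i) / ∏ i, ((α i).factorial : ℝ)) * f (t⁻¹ • x)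

/-- Physicists' Hermite polynomial `H_n(x) = (-1)^n e^{x²} (d/dx)^n e^{-x²}`. -/
def hPoly (n : ℕ) (x : ℝ) : ℝ :=
  (-1 : ℝ) ^ n * Real.exp (x ^ 2) * iteratedDeriv n (fun y => Real.exp (-y ^ 2)) x

/-!
Since `x^α t^{-d-|α|} = t^{-d} (x/t)^α`, the function `(-1)^{|α|} F_α` is the average, against the
weight `(k+1)(1-t)^k dt` on `(0,1]`, of the mass-preserving dilations `t^{-d} G(x/t)` of
`G = x^α f / α!`. Every dilation has the `L¹` norm of `G` and the weight has total mass `1`, so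
Tonelli's theorem (Minkowski's integral inequality) gives integrability and the bound.
-/

open Module Set

section DilationAverage

variable {E : Type*} [NormedAddCommGroup E] [NormedSpace ℝ E] [FiniteDimensional ℝ E]
  [MeasurableSpace E] [BorelSpace E]

def dilationAverage (ν : Measure ℝ) (φ : ℝ → ℝ) (G : E → ℝ) (x : E) : ℝ :=
  ∫ t, φ t * (t ^ finrank ℝ E)⁻¹ * G (t⁻¹ • x) ∂ν

variable (μ : Measure E) [μ.IsAddHaarMeasure]

theorem integral_abs_dilate {t : ℝ} (ht : 0 < t) (c : ℝ) (G : E → ℝ) :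
    ∫ x, |c * (t ^ finrank ℝ E)⁻¹ * G (t⁻¹ • x)| ∂μ = |c| * ∫ x, |G x| ∂μ := by
  have htn : 0 < t ^ finrank ℝ E := pow_pos ht _
  simp_rw [abs_mul, abs_inv, abs_of_pos htn]
  rw [integral_const_mul, Measure.integral_comp_inv_smul_of_nonneg μ (fun x => |G x|) ht.le,
    smul_eq_mul, ← mul_assoc, mul_assoc |c|, inv_mul_cancel₀ htn.ne', mul_one]

variable {ν : Measure ℝ} {φ : ℝ → ℝ} {G : E → ℝ}

theorem integrable_dilationKernel (hν : ∀ᵐ t ∂ν, 0 < t) (hφm : Measurable φ)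
    (hφ : Integrable φ ν) (hGm : Measurable G) (hG : Integrable G μ) :
    Integrable (fun p : ℝ × E => φ p.1 * (p.1 ^ finrank ℝ E)⁻¹ * G (p.1⁻¹ • p.2)) (ν.prod μ) := by
  have hm : Measurable fun p : ℝ × E => φ p.1 * (p.1 ^ finrank ℝ E)⁻¹ * G (p.1⁻¹ • p.2) :=
    ((hφm.comp measurable_fst).mul (measurable_fst.pow_const _).inv).mul
      (hGm.comp (measurable_fst.inv.smul measurable_snd))
  refine (integrable_prod_iff hm.aestronglyMeasurable).2 ⟨?_, ?_⟩
  · filter_upwards [hν] with t ht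
    exact (hG.comp_smul (inv_ne_zero ht.ne')).const_mul _
  · refine (hφ.abs.mul_const (∫ x, |G x| ∂μ)).congr ?_
    filter_upwards [hν] with t ht
    simp only [Real.norm_eq_abs]
    exact (integral_abs_dilate μ ht (φ t) G).symm

theorem integrable_dilationAverage [SFinite ν] (hν : ∀ᵐ t ∂ν, 0 < t) (hφm : Measurable φ)
    (hφ : Integrable φ ν) (hGm : Measurable G) (hG : Integrable G μ) :
    Integrable (dilationAverage ν φ G) μ :=
  (integrable_dilationKernel μ hν hφm hφ hGm hG).integral_prod_right

theorem integral_abs_dilationAverage_le [SFinite ν] (hν : ∀ᵐ t ∂ν, 0 < t) (hφm : Measurable φ)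
    (hφ : Integrable φ ν) (hGm : Measurable G) (hG : Integrable G μ) :
    ∫ x, |dilationAverage ν φ G x| ∂μ ≤ (∫ t, |φ t| ∂ν) * ∫ x, |G x| ∂μ := by
  have hK := integrable_dilationKernel μ hν hφm hφ hGm hG
  calc ∫ x, |dilationAverage ν φ G x| ∂μ
      ≤ ∫ x, ∫ t, |φ t * (t ^ finrank ℝ E)⁻¹ * G (t⁻¹ • x)| ∂ν ∂μ := by
        refine integral_mono (integrable_dilationAverage μ hν hφm hφ hGm hG).abs
          hK.norm.integral_prod_right fun x => ?_
        exact abs_integral_le_integral_abs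
    _ = ∫ t, ∫ x, |φ t * (t ^ finrank ℝ E)⁻¹ * G (t⁻¹ • x)| ∂μ ∂ν :=
        (integral_integral_swap (f := fun t x => |φ t * (t ^ finrank ℝ E)⁻¹ * G (t⁻¹ • x)|)
          hK.norm).symm
    _ = ∫ t, |φ t| * ∫ x, |G x| ∂μ ∂ν := by
        refine integral_congr_ae ?_
        filter_upwards [hν] with t ht
        exact integral_abs_dilate μ ht (φ t) G
    _ = (∫ t, |φ t| ∂ν) * ∫ x, |G x| ∂μ := integral_mul_const _ _

end DilationAverage

theorem integral_Ioc_succ_mul_one_sub_pow (k : ℕ) :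
    ∫ t in Ioc (0 : ℝ) 1, ((k : ℝ) + 1) * (1 - t) ^ k = 1 := by
  rw [← intervalIntegral.integral_of_le zero_le_one, intervalIntegral.integral_const_mul,
    intervalIntegral.integral_comp_sub_left (fun u : ℝ => u ^ k) 1]
  norm_num [integral_pow]
  field_simp

theorem integral_Ioc_abs_succ_mul_one_sub_pow (k : ℕ) :
    ∫ t in Ioc (0 : ℝ) 1, |((k : ℝ) + 1) * (1 - t) ^ k| = 1 := by
  refine (setIntegral_congr_fun measurableSet_Ioc ?_).trans (integral_Ioc_succ_mul_one_sub_pow k)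
  intro t ht
  have h1t : 0 ≤ 1 - t := sub_nonneg.2 ht.2
  exact abs_of_nonneg (by positivity)

theorem prod_inv_smul_pow {d : ℕ} (α : Fin d → ℕ) (t : ℝ) (x : EuclideanSpace ℝ (Fin d)) :
    ∏ i, (t⁻¹ • x) i ^ α i = (t ^ ∑ i, α i)⁻¹ * ∏ i, x i ^ α i := by
  simp only [PiLp.smul_apply, smul_eq_mul, mul_pow, Finset.prod_mul_distrib, ← inv_pow,
    Finset.prod_pow_eq_pow_sum]

theorem Falpha_eq_dilationAverage (d k : ℕ) (α : Fin d → ℕ) (f : EuclideanSpace ℝ (Fin d) → ℝ) :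
    Falpha d k α f = fun x => (-1 : ℝ) ^ (∑ i, α i) *
      dilationAverage (volume.restrict (Ioc 0 1)) (fun t => ((k : ℝ) + 1) * (1 - t) ^ k)
        (fun y => (∏ i, y i ^ α i) * f y / ∏ i, ((α i).factorial : ℝ)) x := by
  funext x
  rw [Falpha, dilationAverage, intervalIntegral.integral_of_le zero_le_one]
  congr 1
  refine setIntegral_congr_fun measurableSet_Ioc fun t ht => ?_
  rw [finrank_euclideanSpace_fin, prod_inv_smul_pow, pow_add]
  field_simp [ht.1.ne']

theorem stmt_0_general (d k : ℕ) (α : Fin d → ℕ)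
    (f : EuclideanSpace ℝ (Fin d) → ℝ) (hf : Measurable f)
    (hint : Integrable (fun x => (∏ i, x i ^ α i) * f x)) :
    Integrable (Falpha d k α f) ∧
      ∫ x, |Falpha d k α f x| ≤
        (∫ x, |(∏ i, x i ^ α i) * f x|) / ∏ i, ((α i).factorial : ℝ) := by
  have hν : ∀ᵐ t ∂(volume.restrict (Ioc (0 : ℝ) 1)), 0 < t :=
    (ae_restrict_iff' measurableSet_Ioc).2 (Eventually.of_forall fun t ht => ht.1)
  have hφm : Measurable fun t : ℝ => ((k : ℝ) + 1) * (1 - t) ^ k := by fun_prop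
  have hφ : Integrable (fun t : ℝ => ((k : ℝ) + 1) * (1 - t) ^ k) (volume.restrict (Ioc 0 1)) :=
    (by fun_prop : Continuous fun t : ℝ => ((k : ℝ) + 1) * (1 - t) ^ k).integrableOn_Ioc
  have hGm : Measurable fun y : EuclideanSpace ℝ (Fin d) =>
      (∏ i, y i ^ α i) * f y / ∏ i, ((α i).factorial : ℝ) := by fun_prop
  have hG := hint.div_const (∏ i, ((α i).factorial : ℝ))
  have hc : (0 : ℝ) < ∏ i, ((α i).factorial : ℝ) :=
    Finset.prod_pos fun i _ => Nat.cast_pos.2 (Nat.factorial_pos (α i))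
  rw [Falpha_eq_dilationAverage]
  refine ⟨(integrable_dilationAverage volume hν hφm hφ hGm hG).const_mul _, ?_⟩
  simp only [abs_mul, abs_pow, abs_neg, abs_one, one_pow, one_mul]
  refine (integral_abs_dilationAverage_le volume hν hφm hφ hGm hG).trans_eq ?_
  rw [integral_Ioc_abs_succ_mul_one_sub_pow, one_mul, ← integral_div]
  simp only [abs_div, abs_mul, abs_of_pos hc]

/-- `F_α` is integrable with `‖F_α‖₁ ≤ ‖x^α f‖₁ / α!`. -/
theorem stmt_0 (d k : ℕ) (hd : 1 ≤ d) (α : Fin d → ℕ) (hα : ∑ i, α i = k + 1)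
    (f : EuclideanSpace ℝ (Fin d) → ℝ) (hf : Measurable f)
    (hint : Integrable (fun x => (∏ i, x i ^ α i) * f x)) :
    Integrable (Falpha d k α f) ∧
      ∫ x, |Falpha d k α f x| ≤
        (∫ x, |(∏ i, x i ^ α i) * f x|) / ∏ i, ((α i).factorial : ℝ) :=
  stmt_0_general d k α f hf hint

end
end

section
/- For every natural number n, Γ((n+1)/2)² ≤ 2^{−n} · π · Γ(n+1), where Γ is the real Gamma function. -/
/-!
The ratio `Γ(x/2)² / (2^(1-x) π Γ(x))` equals `1` at `x = 1` and `2/π` at `x = 2`, and the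
functional equation shows that passing from `x` to `x + 2` multiplies it by `x / (x + 1) < 1`.
-/

open Real

namespace Real

theorem Gamma_div_two_sq_le_add_two {x : ℝ} (hx : 0 < x)
    (h : Gamma (x / 2) ^ 2 ≤ 2 ^ (1 - x) * π * Gamma x) :
    Gamma ((x + 2) / 2) ^ 2 ≤ 2 ^ (1 - (x + 2)) * π * Gamma (x + 2) := by
  have hGamma_half : Gamma ((x + 2) / 2) = x / 2 * Gamma (x / 2) := by
    rw [show (x + 2) / 2 = x / 2 + 1 by ring, Gamma_add_one (by positivity)]
  have hGamma : Gamma (x + 2) = (x + 1) * x * Gamma x := by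
    rw [show x + 2 = x + 1 + 1 by ring, Gamma_add_one (by positivity), Gamma_add_one hx.ne',
      mul_assoc]
  have hpow : (2 : ℝ) ^ (1 - (x + 2)) = 2 ^ (1 - x) / 4 := by
    rw [show 1 - (x + 2) = 1 - x - 2 by ring, rpow_sub two_pos, rpow_two]
    norm_num
  have hbound_nonneg : 0 ≤ 2 ^ (1 - x) * π * Gamma x := by
    have := Gamma_pos_of_pos hx
    positivity
  rw [hGamma_half, hGamma, hpow]
  calc (x / 2 * Gamma (x / 2)) ^ 2 = x ^ 2 / 4 * Gamma (x / 2) ^ 2 := by ring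
    _ ≤ x ^ 2 / 4 * (2 ^ (1 - x) * π * Gamma x) := by gcongr
    _ ≤ (x + 1) * x / 4 * (2 ^ (1 - x) * π * Gamma x) := by gcongr; nlinarith
    _ = 2 ^ (1 - x) / 4 * π * ((x + 1) * x * Gamma x) := by ring

theorem Gamma_natCast_add_one_div_two_sq_le (n : ℕ) :
    Gamma ((n + 1 : ℝ) / 2) ^ 2 ≤ 2 ^ (1 - (n + 1 : ℝ)) * π * Gamma (n + 1) := by
  induction n using Nat.twoStepInduction with
  | zero => norm_num [Gamma_one_half_eq, pi_pos.le]
  | one =>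
    norm_num [rpow_neg_one]
    linarith [pi_gt_three]
  | more n ih _ =>
    rw [show ((n + 2 : ℕ) : ℝ) + 1 = (n + 1 : ℝ) + 2 by push_cast; ring]
    exact Gamma_div_two_sq_le_add_two (by positivity) ih

end Real

/-- `Γ((n+1)/2)² ≤ 2^{-n} π Γ(n+1)`. -/
theorem stmt_7 (n : ℕ) :
    Real.Gamma (((n : ℝ) + 1) / 2) ^ 2 ≤
      2 ^ (-(n : ℝ)) * π * Real.Gamma ((n : ℝ) + 1) := by
  simpa using Real.Gamma_natCast_add_one_div_two_sq_le n
end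

section
/- Let d ≥ 1, C > 0, t₀ > 0, and u₀(x) = C e^{−|x|²/(4t₀)} on ℝ^d. Let u_k be the heat-kernel derivative approximation of order k built from u₀. Then for every fixed t with 0 < t < t₀, sup_{x ∈ ℝ^d} |u_k(x,t)| → ∞ as k → ∞. -/
open MeasureTheory Real Filter

noncomputable section

/-!
At `x = 0` everything factorises over the coordinates. With `a = 1/(4t)` and `b = 1/(4t₀)`,
the odd derivatives of the Gaussian vanish at `0`, the even ones are Hermite coefficients, and the
even Gaussian moments are Gamma values. This gives
`u_k(0,t) = (4πt)^{-d/2} C ∑_{m ≤ k/2} (-1)^m V_m` with `V_m = ∑_{|β| = m} ∏ e(β_i)`, where the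
positive one-dimensional terms satisfy `e(j+1) = (a/b) (2j+1)/(2j+2) e(j)`. Since
`a/b = t₀/t > 1`, raising the largest entry of `β` by one shows that `V_m` eventually grows
geometrically, and alternating partial sums of such a sequence are unbounded. Finally `u_k(·,t)`
is bounded in `x` (Hermite polynomial times Gaussian), so its supremum dominates `|u_k(0,t)|`.
-/

namespace HeatApproxDivergence

open scoped Nat ContDiff
open Polynomial Topology Finset

def gauss (a s : ℝ) : ℝ := exp (-a * s ^ 2)

lemma contDiff_gauss (a : ℝ) : ContDiff ℝ ∞ (gauss a) := by
  unfold gauss; fun_prop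

lemma iteratedDeriv_gauss {a : ℝ} (ha : 0 ≤ a) (n : ℕ) (x : ℝ) :
    iteratedDeriv n (gauss a) x =
      (-√(2 * a)) ^ n * aeval (√(2 * a) * x) (hermite n) * gauss a x := by
  have hsq : √(2 * a) ^ 2 = 2 * a := Real.sq_sqrt (by linarith)
  have hcomp : gauss a = fun s => exp (-((√(2 * a) * s) ^ 2 / 2)) := by
    funext s; rw [gauss, mul_pow, hsq]; ring_nf
  have hscale := iteratedDeriv_comp_const_mul (n := n)
    (f := fun y => exp (-(y ^ 2 / 2))) (by fun_prop) (√(2 * a))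
  beta_reduce at hscale
  rw [hcomp, hscale, iteratedDeriv_eq_iterate]
  beta_reduce
  rw [deriv_gaussian_eq_hermite_mul_gaussian, neg_pow]
  ring

lemma iteratedDeriv_gauss_zero_of_odd {a : ℝ} (ha : 0 ≤ a) {n : ℕ} (hn : Odd n) :
    iteratedDeriv n (gauss a) 0 = 0 := by
  rw [iteratedDeriv_gauss ha, mul_zero, aeval_def, eval₂_at_zero,
    coeff_hermite_of_odd_add (by simpa using hn)]
  simp

lemma iteratedDeriv_gauss_zero_two_mul {a : ℝ} (ha : 0 ≤ a) (j : ℕ) :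
    iteratedDeriv (2 * j) (gauss a) 0 = (-(2 * a)) ^ j * (2 * j - 1)‼ := by
  have hcoeff := coeff_hermite_explicit j 0
  rw [add_zero, Nat.choose_zero_right] at hcoeff
  rw [iteratedDeriv_gauss ha, mul_zero, aeval_def, eval₂_at_zero, hcoeff, pow_mul, neg_sq,
    Real.sq_sqrt (by linarith)]
  simp [gauss, neg_pow (2 * a)]
  ring

lemma tendsto_eval_mul_exp_neg_mul_sq_cocompact (P : ℝ[X]) {a : ℝ} (ha : 0 < a) :
    Tendsto (fun x => P.eval x * exp (-a * x ^ 2)) (cocompact ℝ) (𝓝 0) := by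
  simp_rw [eval_eq_sum_range, sum_mul]
  rw [← sum_const_zero (s := range (P.natDegree + 1))]
  refine tendsto_finsetSum _ fun i _ => ?_
  have h := (tendsto_rpow_abs_mul_exp_neg_mul_sq_cocompact ha i).const_mul |P.coeff i|
  rw [mul_zero] at h
  refine squeeze_zero_norm (fun x => le_of_eq ?_) h
  rw [Real.norm_eq_abs, abs_mul, abs_mul, abs_pow, Real.rpow_natCast, Real.abs_exp, mul_assoc]

lemma exists_abs_iteratedDeriv_gauss_le {a : ℝ} (ha : 0 < a) (n : ℕ) :
    ∃ B, ∀ x, |iteratedDeriv n (gauss a) x| ≤ B := by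
  set H : ℝ[X] := (hermite n).map (Int.castRingHom ℝ)
  have hcont : Continuous fun y => H.eval y * exp (-(1 / 2) * y ^ 2) := by fun_prop
  let f : ZeroAtInftyContinuousMap ℝ ℝ :=
    ⟨⟨_, hcont⟩, tendsto_eval_mul_exp_neg_mul_sq_cocompact H one_half_pos⟩
  obtain ⟨B, hB⟩ := (Metric.isBounded_iff_subset_closedBall 0).1 f.isBounded_range
  refine ⟨√(2 * a) ^ n * B, fun x => ?_⟩
  have hfx : |f (√(2 * a) * x)| ≤ B := by
    simpa using hB ⟨_, rfl⟩
  have hgauss : gauss a x = exp (-(1 / 2) * (√(2 * a) * x) ^ 2) := by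
    rw [gauss, mul_pow, Real.sq_sqrt (by linarith)]; ring_nf
  rw [iteratedDeriv_gauss ha.le, hgauss, mul_assoc, abs_mul, abs_pow, abs_neg,
    abs_of_nonneg (Real.sqrt_nonneg _), aeval_def, ← eval_map]
  exact mul_le_mul_of_nonneg_left hfx (by positivity)

def gaussMoment (b : ℝ) (n : ℕ) : ℝ := ∫ s, s ^ n * exp (-b * s ^ 2)

lemma gaussMoment_two_mul {b : ℝ} (hb : 0 < b) (j : ℕ) :
    gaussMoment b (2 * j) = Gamma (j + 1 / 2) / b ^ ((j : ℝ) + 1 / 2) := by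
  have heven : gaussMoment b (2 * j) = ∫ s, |s| ^ (2 * j) * exp (-b * |s| ^ 2) := by
    simp only [gaussMoment, pow_mul, sq_abs]
  have hIoi : ∫ s in Set.Ioi (0 : ℝ), s ^ (2 * j) * exp (-b * s ^ 2) =
      ∫ s in Set.Ioi (0 : ℝ), s ^ ((2 * j : ℕ) : ℝ) * exp (-b * s ^ (2 : ℝ)) := by
    simp only [Real.rpow_natCast, Real.rpow_two]
  rw [heven, integral_comp_abs (f := fun s => s ^ (2 * j) * exp (-b * s ^ 2)), hIoi,
    integral_rpow_mul_exp_neg_mul_rpow two_pos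
      (neg_one_lt_zero.trans_le (Nat.cast_nonneg _)) hb,
    show ((2 * j : ℕ) + 1 : ℝ) / 2 = j + 1 / 2 by push_cast; ring,
    show -((2 * j : ℕ) + 1 : ℝ) / 2 = -(j + 1 / 2) by push_cast; ring, Real.rpow_neg hb.le]
  field_simp

lemma gaussMoment_two_mul_pos {b : ℝ} (hb : 0 < b) (j : ℕ) : 0 < gaussMoment b (2 * j) := by
  rw [gaussMoment_two_mul hb]
  exact div_pos (Real.Gamma_pos_of_pos (by positivity)) (by positivity)

lemma gaussMoment_two_mul_succ {b : ℝ} (hb : 0 < b) (j : ℕ) :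
    gaussMoment b (2 * (j + 1)) = (2 * j + 1) / (2 * b) * gaussMoment b (2 * j) := by
  rw [gaussMoment_two_mul hb, gaussMoment_two_mul hb, Nat.cast_succ,
    show (j : ℝ) + 1 + 1 / 2 = j + 1 / 2 + 1 by ring, Real.Gamma_add_one (by positivity),
    Real.rpow_add_one hb.ne']
  field_simp

section TensorProduct

variable {d : ℕ}

def prodIteratedDeriv (c : ℝ) (h : Fin d → ℝ → ℝ) (n : Fin d → ℕ)
    (z : EuclideanSpace ℝ (Fin d)) : ℝ :=
  c * ∏ j, iteratedDeriv (n j) (h j) (z j)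

variable (c : ℝ) {h : Fin d → ℝ → ℝ}

lemma pd_prodIteratedDeriv (hh : ∀ j, ContDiff ℝ ∞ (h j)) (n : Fin d → ℕ) (i : Fin d) :
    pd d i (prodIteratedDeriv c h n) = prodIteratedDeriv c h (n + Pi.single i 1) := by
  funext x
  have hcoord (j : Fin d) :
      HasFDerivAt (fun z : EuclideanSpace ℝ (Fin d) => iteratedDeriv (n j) (h j) (z j))
        (deriv (iteratedDeriv (n j) (h j)) (x j) •
          (EuclideanSpace.proj j : EuclideanSpace ℝ (Fin d) →L[ℝ] ℝ)) x := by
    have hproj : HasFDerivAt (fun z : EuclideanSpace ℝ (Fin d) => z j)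
        (EuclideanSpace.proj j : EuclideanSpace ℝ (Fin d) →L[ℝ] ℝ) x :=
      (EuclideanSpace.proj j : EuclideanSpace ℝ (Fin d) →L[ℝ] ℝ).hasFDerivAt
    exact (((hh j).differentiable_iteratedDeriv _ (by exact_mod_cast WithTop.coe_lt_top _))
      (x j)).hasDerivAt.comp_hasFDerivAt x hproj
  have hprod : HasFDerivAt (prodIteratedDeriv c h n) _ x :=
    (HasFDerivAt.finsetProd (u := univ) fun j _ => hcoord j).const_mul c
  have hrest : ∏ j ∈ univ.erase i, iteratedDeriv ((n + Pi.single i 1 : Fin d → ℕ) j) (h j) (x j) =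
      ∏ j ∈ univ.erase i, iteratedDeriv (n j) (h j) (x j) :=
    prod_congr rfl fun j hj => by simp [ne_of_mem_erase hj]
  rw [pd, hprod.fderiv, prodIteratedDeriv, ← mul_prod_erase _ _ (mem_univ i), hrest]
  simp [iteratedDeriv_succ, mul_comm]

lemma iterate_pd_prodIteratedDeriv (hh : ∀ j, ContDiff ℝ ∞ (h j)) (n : Fin d → ℕ) (i : Fin d)
    (m : ℕ) :
    (pd d i)^[m] (prodIteratedDeriv c h n) = prodIteratedDeriv c h (n + Pi.single i m) := by
  induction m with
  | zero => simp
  | succ m ih =>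
    rw [Function.iterate_succ_apply', ih, pd_prodIteratedDeriv c hh, add_assoc, ← Pi.single_add]

lemma foldr_pd_prodIteratedDeriv (hh : ∀ j, ContDiff ℝ ∞ (h j)) (α n : Fin d → ℕ)
    (l : List (Fin d)) :
    (l.map fun i => (pd d i)^[α i]).foldr (· ∘ ·) id (prodIteratedDeriv c h n) =
      prodIteratedDeriv c h (n + (l.map fun i => Pi.single i (α i)).sum) := by
  induction l with
  | nil => simp
  | cons i l ih =>
    rw [List.map_cons, List.foldr_cons, Function.comp_apply, ih,
      iterate_pd_prodIteratedDeriv c hh, List.map_cons, List.sum_cons, add_assoc,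
      add_comm (List.sum _)]

lemma Dmul_prodIteratedDeriv (hh : ∀ j, ContDiff ℝ ∞ (h j)) (α n : Fin d → ℕ) :
    Dmul d α (prodIteratedDeriv c h n) = prodIteratedDeriv c h (n + α) := by
  rw [Dmul, foldr_pd_prodIteratedDeriv c hh, ← Fin.sum_univ_def, univ_sum_single]

end TensorProduct

lemma exp_neg_mul_norm_sq {d : ℕ} (b : ℝ) (y : EuclideanSpace ℝ (Fin d)) :
    exp (-b * ‖y‖ ^ 2) = ∏ i, gauss b (y i) := by
  simp_rw [gauss, ← exp_sum, EuclideanSpace.real_norm_sq_eq, mul_sum]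

lemma heatKernel_eq_prodIteratedDeriv (d : ℕ) (t : ℝ) :
    (fun z => heatKernel d z t) = prodIteratedDeriv ((4 * π * t) ^ (-(d : ℝ) / 2))
      (fun _ => gauss (1 / (4 * t))) 0 := by
  funext z
  rw [heatKernel, prodIteratedDeriv,
    show -‖z‖ ^ 2 / (4 * t) = -(1 / (4 * t)) * ‖z‖ ^ 2 by ring, exp_neg_mul_norm_sq]
  simp

lemma Dmul_heatKernel {d : ℕ} (α : Fin d → ℕ) (t : ℝ) (x : EuclideanSpace ℝ (Fin d)) :
    Dmul d α (fun z => heatKernel d z t) x =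
      (4 * π * t) ^ (-(d : ℝ) / 2) * ∏ j, iteratedDeriv (α j) (gauss (1 / (4 * t))) (x j) := by
  rw [heatKernel_eq_prodIteratedDeriv, Dmul_prodIteratedDeriv _ fun _ => contDiff_gauss _,
    zero_add, prodIteratedDeriv]

section MultiIndexSums

variable {R : Type*} [CommSemiring R] {w : ℕ → R}

lemma sum_range_succ_eq_sum_range_half (hw : ∀ n, Odd n → w n = 0) (k : ℕ) :
    ∑ j ∈ range (k + 1), w j = ∑ m ∈ range (k / 2 + 1), w (2 * m) := by
  rw [← sum_image fun _ _ _ _ h => Nat.eq_of_mul_eq_mul_left two_pos h]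
  refine (sum_subset (fun j hj => ?_) fun j _ hj => hw j ?_).symm
  · obtain ⟨m, hm, rfl⟩ := mem_image.1 hj
    rw [mem_range] at hm ⊢
    omega
  · refine Nat.not_even_iff_odd.1 fun ⟨m, hm⟩ => hj (mem_image.2 ⟨m, ?_, by omega⟩)
    rw [mem_range] at *
    omega

variable {d : ℕ}

lemma sum_antidiagonalTuple_prod_eq_zero (hw : ∀ n, Odd n → w n = 0) {j : ℕ} (hj : Odd j) :
    ∑ α ∈ Nat.antidiagonalTuple d j, ∏ i, w (α i) = 0 := by
  refine sum_eq_zero fun α hα => ?_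
  obtain ⟨i, hi⟩ : ∃ i, Odd (α i) := by
    by_contra! hall
    rw [Nat.mem_antidiagonalTuple] at hα
    exact Nat.not_even_iff_odd.2 hj (hα ▸ even_sum _ fun i _ => Nat.not_odd_iff_even.1 (hall i))
  exact prod_eq_zero (mem_univ i) (hw _ hi)

lemma sum_antidiagonalTuple_two_mul (hw : ∀ n, Odd n → w n = 0) (m : ℕ) :
    ∑ α ∈ Nat.antidiagonalTuple d (2 * m), ∏ i, w (α i) =
      ∑ β ∈ Nat.antidiagonalTuple d m, ∏ i, w (2 * β i) := by
  have hdouble : ∑ β ∈ Nat.antidiagonalTuple d m, ∏ i, w (2 * β i) =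
      ∑ α ∈ (Nat.antidiagonalTuple d m).image fun β i => 2 * β i, ∏ i, w (α i) :=
    (sum_image (f := fun α : Fin d → ℕ => ∏ i, w (α i)) fun β _ γ _ h =>
      funext fun i => Nat.eq_of_mul_eq_mul_left two_pos (congrFun h i)).symm
  rw [hdouble]
  refine (sum_subset (fun α hα => ?_) fun α hα hαim => ?_).symm
  · obtain ⟨β, hβ, rfl⟩ := mem_image.1 hα
    rw [Nat.mem_antidiagonalTuple] at hβ ⊢
    rw [← mul_sum, hβ]
  · by_contra hne
    have heven (i : Fin d) : Even (α i) :=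
      Nat.not_odd_iff_even.1 fun hodd => hne (prod_eq_zero (mem_univ i) (hw _ hodd))
    refine hαim (mem_image.2
      ⟨fun i => α i / 2, ?_, funext fun i => Nat.two_mul_div_two_of_even (heven i)⟩)
    rw [Nat.mem_antidiagonalTuple] at hα ⊢
    have hhalf : 2 * ∑ i, α i / 2 = ∑ i, α i := by
      rw [mul_sum]
      exact sum_congr rfl fun i _ => Nat.two_mul_div_two_of_even (heven i)
    omega

end MultiIndexSums

lemma mul_sum_antidiagonalTuple_prod_le {d : ℕ} {u : ℕ → ℝ} (hu : ∀ j, 0 ≤ u j) {c : ℝ}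
    {N : ℕ} (hN : ∀ j, N ≤ j → c * u j ≤ u (j + 1)) (hd : 0 < d) {m : ℕ} (hm : d * N ≤ m) :
    c * ∑ β ∈ Nat.antidiagonalTuple d m, ∏ i, u (β i) ≤
      ∑ γ ∈ Nat.antidiagonalTuple d (m + 1), ∏ i, u (γ i) := by
  have : Nonempty (Fin d) := ⟨⟨0, hd⟩⟩
  choose top htop using fun β : Fin d → ℕ => Finite.exists_max β
  set bump := fun β : Fin d → ℕ => β + Pi.single (top β) 1
  have hinj : Function.Injective bump := by
    intro β γ h
    by_cases hk : top β = top γ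
    · simpa [bump, hk] using h
    · have h1 := congrFun h (top β)
      have h2 := congrFun h (top γ)
      simp only [bump, Pi.add_apply, Pi.single_apply, hk, Ne.symm hk, if_true, if_false] at h1 h2
      have := htop β (top γ)
      have := htop γ (top β)
      omega
  have hmem : ∀ β ∈ Nat.antidiagonalTuple d m, bump β ∈ Nat.antidiagonalTuple d (m + 1) := by
    intro β hβ
    rw [Nat.mem_antidiagonalTuple] at hβ ⊢
    simp [bump, sum_add_distrib, hβ]
  have hterm : ∀ β ∈ Nat.antidiagonalTuple d m, c * ∏ i, u (β i) ≤ ∏ i, u (bump β i) := by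
    intro β hβ
    rw [Nat.mem_antidiagonalTuple] at hβ
    have hN_le : N ≤ β (top β) := by
      have : m ≤ d * β (top β) := by
        simpa [← hβ] using sum_le_sum fun i (_ : i ∈ univ) => htop β i
      exact Nat.le_of_mul_le_mul_left (hm.trans this) hd
    have hrest :
        ∏ i ∈ univ.erase (top β), u (bump β i) = ∏ i ∈ univ.erase (top β), u (β i) :=
      prod_congr rfl fun i hi => by simp [bump, ne_of_mem_erase hi]
    rw [← mul_prod_erase _ _ (mem_univ (top β)),
      ← mul_prod_erase univ (fun i => u (bump β i)) (mem_univ (top β)), hrest, ← mul_assoc]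
    simpa [bump] using mul_le_mul_of_nonneg_right (hN _ hN_le) (prod_nonneg fun i _ => hu _)
  calc c * ∑ β ∈ Nat.antidiagonalTuple d m, ∏ i, u (β i)
      = ∑ β ∈ Nat.antidiagonalTuple d m, c * ∏ i, u (β i) := mul_sum _ _ _
    _ ≤ ∑ β ∈ Nat.antidiagonalTuple d m, ∏ i, u (bump β i) := sum_le_sum hterm
    _ = ∑ γ ∈ (Nat.antidiagonalTuple d m).image bump, ∏ i, u (γ i) :=
      (sum_image (f := fun γ : Fin d → ℕ => ∏ i, u (γ i)) fun β _ γ _ h => hinj h).symm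
    _ ≤ ∑ γ ∈ Nat.antidiagonalTuple d (m + 1), ∏ i, u (γ i) :=
      sum_le_sum_of_subset_of_nonneg (image_subset_iff.2 hmem) fun γ _ _ =>
        prod_nonneg fun i _ => hu _

lemma tendsto_abs_sum_range_neg_one_pow_mul (V : ℕ → ℝ)
    (hV : Tendsto (fun m => V (m + 1) - V m) atTop atTop) :
    Tendsto (fun M => |∑ m ∈ range M, (-1) ^ m * V m|) atTop atTop := by
  set T := fun M => ∑ m ∈ range M, (-1 : ℝ) ^ m * V m
  set R := fun M => (-1 : ℝ) ^ M * T (M + 1)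
  have hR_succ (M : ℕ) : R (M + 1) = V (M + 1) - R M := by
    have hsign : ((-1 : ℝ) ^ (M + 1)) ^ 2 = 1 := by
      rw [← pow_mul, pow_mul', neg_one_sq, one_pow]
    simp only [R, T, sum_range_succ _ (M + 1)]
    linear_combination V (M + 1) * hsign
  have hR_abs (M : ℕ) : |R M| = |T (M + 1)| := by simp [R, abs_mul]
  obtain ⟨m₀, hmono⟩ := eventually_atTop.1 (hV.eventually_ge_atTop 0)
  set K := |R m₀| + |V m₀|
  have hbounds : ∀ M, m₀ ≤ M → -K ≤ R M ∧ R M ≤ V M + K := by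
    intro M hM
    induction M, hM using Nat.le_induction with
    | base =>
      constructor <;>
        linarith [neg_abs_le (R m₀), le_abs_self (R m₀), neg_abs_le (V m₀), abs_nonneg (V m₀)]
    | succ M hM ih =>
      rw [hR_succ]
      constructor <;> linarith [hmono M hM]
  have hlower : ∀ M, m₀ ≤ M → V (M + 1) - V M - K ≤ |T (M + 2)| := by
    intro M hM
    rw [← hR_abs, hR_succ]
    linarith [(hbounds M hM).2, le_abs_self (V (M + 1) - R M)]
  refine (tendsto_add_atTop_iff_nat 2).1 (tendsto_atTop_mono' atTop ?_
    (tendsto_atTop_add_const_right atTop (-K) hV))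
  filter_upwards [eventually_ge_atTop m₀] with M hM
  simpa [sub_eq_add_neg] using hlower M hM

lemma integral_prod_pow_mul_exp_neg_mul_norm_sq {d : ℕ} (b : ℝ) (α : Fin d → ℕ) :
    ∫ y : EuclideanSpace ℝ (Fin d), (∏ i, y i ^ α i) * exp (-b * ‖y‖ ^ 2) =
      ∏ i, gaussMoment b (α i) := by
  simp_rw [exp_neg_mul_norm_sq, ← prod_mul_distrib]
  rw [← (EuclideanSpace.volume_preserving_symm_measurableEquiv_toLp (Fin d)).symm.integral_comp',
    volume_pi]
  exact integral_fintype_prod_eq_prod (fun i s => s ^ α i * gauss b s)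

/-- The contribution of one coordinate to a term of `heatApprox` at `x = 0`, for the heat kernel
`exp (-a s²)` and the initial datum `exp (-b s²)`. -/
def gaussTerm (a b : ℝ) (n : ℕ) : ℝ :=
  (-1) ^ n * gaussMoment b n * iteratedDeriv n (gauss a) 0 / n !

def evenGaussTerm (a b : ℝ) (j : ℕ) : ℝ :=
  gaussMoment b (2 * j) * (2 * a) ^ j * (2 * j - 1)‼ / (2 * j)!

variable {a b : ℝ}

lemma gaussTerm_of_odd (ha : 0 ≤ a) {n : ℕ} (hn : Odd n) : gaussTerm a b n = 0 := by
  rw [gaussTerm, iteratedDeriv_gauss_zero_of_odd ha hn, mul_zero, zero_div]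

lemma gaussTerm_two_mul (ha : 0 ≤ a) (j : ℕ) :
    gaussTerm a b (2 * j) = (-1) ^ j * evenGaussTerm a b j := by
  rw [gaussTerm, evenGaussTerm, iteratedDeriv_gauss_zero_two_mul ha, pow_mul, neg_one_sq,
    one_pow, neg_pow]
  ring

lemma evenGaussTerm_pos (ha : 0 < a) (hb : 0 < b) (j : ℕ) : 0 < evenGaussTerm a b j := by
  have := gaussMoment_two_mul_pos hb j
  have := Nat.doubleFactorial_pos (2 * j - 1)
  unfold evenGaussTerm
  positivity

lemma evenGaussTerm_succ (hb : 0 < b) (j : ℕ) :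
    evenGaussTerm a b (j + 1) = a / b * ((2 * j + 1) / (2 * j + 2)) * evenGaussTerm a b j := by
  rw [evenGaussTerm, evenGaussTerm, gaussMoment_two_mul_succ hb,
    show 2 * (j + 1) - 1 = 2 * j + 1 by omega, Nat.doubleFactorial_add_one,
    show 2 * (j + 1) = 2 * j + 1 + 1 by ring, Nat.factorial_succ, Nat.factorial_succ]
  push_cast
  field_simp
  ring

def evenGaussSum (a b : ℝ) (d m : ℕ) : ℝ :=
  ∑ β ∈ Nat.antidiagonalTuple d m, ∏ i, evenGaussTerm a b (β i)

lemma sum_gaussTerm_eq_alternating (ha : 0 ≤ a) (d k : ℕ) :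
    ∑ j ∈ range (k + 1), ∑ α ∈ Nat.antidiagonalTuple d j, ∏ i, gaussTerm a b (α i) =
      ∑ m ∈ range (k / 2 + 1), (-1) ^ m * evenGaussSum a b d m := by
  have hodd (n : ℕ) (hn : Odd n) : gaussTerm a b n = 0 := gaussTerm_of_odd ha hn
  rw [sum_range_succ_eq_sum_range_half (fun j => sum_antidiagonalTuple_prod_eq_zero hodd)]
  refine sum_congr rfl fun m _ => ?_
  rw [sum_antidiagonalTuple_two_mul hodd, evenGaussSum, mul_sum]
  refine sum_congr rfl fun β hβ => ?_
  rw [Nat.mem_antidiagonalTuple] at hβ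
  simp_rw [gaussTerm_two_mul ha, prod_mul_distrib, prod_pow_eq_pow_sum, hβ]

lemma tendsto_evenGaussSum_sub {d : ℕ} (hd : 0 < d) (hb : 0 < b) (hba : b < a) :
    Tendsto (fun m => evenGaussSum a b d (m + 1) - evenGaussSum a b d m) atTop atTop := by
  have ha : 0 < a := hb.trans hba
  have hpos (m : ℕ) : 0 < evenGaussSum a b d m :=
    sum_pos (fun β _ => prod_pos fun i _ => evenGaussTerm_pos ha hb _)
      ⟨Pi.single ⟨0, hd⟩ m, by simp [Nat.mem_antidiagonalTuple]⟩
  obtain ⟨N, hN⟩ := exists_nat_gt (b / (a - b))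
  have hc : 1 < a / b * ((2 * N + 1) / (2 * N + 2)) := by
    rw [div_lt_iff₀ (sub_pos.2 hba)] at hN
    rw [div_mul_div_comm, one_lt_div (by positivity)]
    nlinarith
  set c := a / b * ((2 * N + 1) / (2 * N + 2))
  have hterm (j : ℕ) (hj : N ≤ j) : c * evenGaussTerm a b j ≤ evenGaussTerm a b (j + 1) := by
    have hjN : (N : ℝ) ≤ j := by exact_mod_cast hj
    have hratio : ((2 * N + 1) / (2 * N + 2) : ℝ) ≤ (2 * j + 1) / (2 * j + 2) := by
      rw [div_le_div_iff₀ (by positivity) (by positivity)]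
      nlinarith
    rw [evenGaussTerm_succ hb]
    exact mul_le_mul_of_nonneg_right (mul_le_mul_of_nonneg_left hratio (by positivity))
      (evenGaussTerm_pos ha hb j).le
  have hgeom (m : ℕ) (hm : d * N ≤ m) : c * evenGaussSum a b d m ≤ evenGaussSum a b d (m + 1) :=
    mul_sum_antidiagonalTuple_prod_le (fun j => (evenGaussTerm_pos ha hb j).le) hterm hd hm
  have hgrow : Tendsto (fun m => evenGaussSum a b d m) atTop atTop :=
    (tendsto_add_atTop_iff_nat (d * N)).1 <| tendsto_atTop_of_geom_le (hpos _) hc fun m => by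
      rw [add_right_comm]
      exact hgeom _ (by omega)
  refine tendsto_atTop_mono' atTop ?_ (hgrow.const_mul_atTop (sub_pos.2 hc))
  filter_upwards [eventually_ge_atTop (d * N)] with m hm
  linarith [hgeom m hm]

lemma heatApprox_gaussian_zero (d k : ℕ) (C t₀ t : ℝ) :
    heatApprox d k (fun y => C * exp (-‖y‖ ^ 2 / (4 * t₀))) 0 t =
      (4 * π * t) ^ (-(d : ℝ) / 2) * C * ∑ j ∈ range (k + 1),
        ∑ α ∈ Nat.antidiagonalTuple d j, ∏ i, gaussTerm (1 / (4 * t)) (1 / (4 * t₀)) (α i) := by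
  rw [heatApprox, mul_sum]
  refine sum_congr rfl fun j _ => ?_
  rw [mul_sum]
  refine sum_congr rfl fun α _ => ?_
  have hmoment :
      ∫ y : EuclideanSpace ℝ (Fin d), (∏ i, y i ^ α i) * (C * exp (-‖y‖ ^ 2 / (4 * t₀))) =
        C * ∏ i, gaussMoment (1 / (4 * t₀)) (α i) := by
    rw [← integral_prod_pow_mul_exp_neg_mul_norm_sq, ← integral_const_mul]
    congr with y
    ring_nf
  rw [hmoment, Dmul_heatKernel]
  simp only [gaussTerm, prod_div_distrib, prod_mul_distrib, prod_pow_eq_pow_sum, PiLp.zero_apply]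
  ring

lemma exists_abs_heatApprox_le {d : ℕ} (k : ℕ) (u₀ : EuclideanSpace ℝ (Fin d) → ℝ) {t : ℝ}
    (ht : 0 < t) : ∃ B, ∀ x, |heatApprox d k u₀ x t| ≤ B := by
  choose B hB using exists_abs_iteratedDeriv_gauss_le (a := 1 / (4 * t)) (by positivity)
  refine ⟨∑ j ∈ range (k + 1), ∑ α ∈ Nat.antidiagonalTuple d j,
    |(-1) ^ (∑ i, α i) / ∏ i, ((α i)! : ℝ)| * |∫ y, (∏ i, y i ^ α i) * u₀ y| *
      (|(4 * π * t) ^ (-(d : ℝ) / 2)| * ∏ i, B (α i)), fun x => ?_⟩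
  refine (abs_sum_le_sum_abs _ _).trans (sum_le_sum fun j _ => ?_)
  refine (abs_sum_le_sum_abs _ _).trans (sum_le_sum fun α _ => ?_)
  rw [abs_mul, abs_mul, Dmul_heatKernel, abs_mul ((4 * π * t) ^ (-(d : ℝ) / 2)), abs_prod]
  gcongr with i
  exact hB _ _

end HeatApproxDivergence

open HeatApproxDivergence

theorem stmt_14_general (d : ℕ) (hd : 1 ≤ d) (C t₀ : ℝ) (hC : 0 < C)
    (t : ℝ) (ht : 0 < t) (htt₀ : t < t₀) :
    Tendsto (fun k : ℕ => ⨆ x : EuclideanSpace ℝ (Fin d),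
        |heatApprox d k (fun y => C * Real.exp (-‖y‖ ^ 2 / (4 * t₀))) x t|)
      atTop atTop := by
  set u₀ := fun y : EuclideanSpace ℝ (Fin d) => C * Real.exp (-‖y‖ ^ 2 / (4 * t₀))
  set a := 1 / (4 * t)
  set b := 1 / (4 * t₀)
  have ht₀ : 0 < t₀ := ht.trans htt₀
  have hb : 0 < b := by positivity
  have hba : b < a := one_div_lt_one_div_of_lt (by positivity) (by linarith)
  have hK : 0 < (4 * π * t) ^ (-(d : ℝ) / 2) * C := by positivity
  have hzero (k : ℕ) : |heatApprox d k u₀ 0 t| = (4 * π * t) ^ (-(d : ℝ) / 2) * C *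
      |∑ m ∈ Finset.range (k / 2 + 1), (-1) ^ m * evenGaussSum a b d m| := by
    rw [heatApprox_gaussian_zero, sum_gaussTerm_eq_alternating (by positivity), abs_mul,
      abs_of_pos hK]
  have hdiv :
      Tendsto (fun k => |∑ m ∈ Finset.range (k / 2 + 1), (-1) ^ m * evenGaussSum a b d m|)
        atTop atTop :=
    (tendsto_abs_sum_range_neg_one_pow_mul _ (tendsto_evenGaussSum_sub hd hb hba)).comp <|
      tendsto_atTop_atTop.2 fun M => ⟨2 * M, fun k hk => by omega⟩
  refine tendsto_atTop_mono (fun k => ?_) (hdiv.const_mul_atTop hK)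
  obtain ⟨B, hB⟩ := exists_abs_heatApprox_le k u₀ ht
  rw [← hzero]
  exact le_ciSup ⟨B, Set.forall_mem_range.2 hB⟩ 0

/-- Divergence of the approximation: for a Gaussian initial datum and
any fixed `0 < t < t₀`, `sup_x |u_k(x,t)| → ∞` as `k → ∞`. -/
theorem stmt_14 (d : ℕ) (hd : 1 ≤ d) (C t₀ : ℝ) (hC : 0 < C) (ht₀ : 0 < t₀)
    (t : ℝ) (ht : 0 < t) (htt₀ : t < t₀) :
    Tendsto (fun k : ℕ => ⨆ x : EuclideanSpace ℝ (Fin d),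
        |heatApprox d k (fun y => C * Real.exp (-‖y‖ ^ 2 / (4 * t₀))) x t|)
      atTop atTop :=
  stmt_14_general d hd C t₀ hC t ht htt₀
end
end
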